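/- Suppose s ≥ 2 is an integer and d ≥ 3 is an odd integer. Then there exist positive integers s' and d' with d' ≤ d such that for all positive integers n: ν_d(f_n(s,-1)) = 0 if d' ∤ n, and ν_d(f_n(s,-1)) = ν_d(s'·n/d') if d' | n, where ν_d(N) denotes the largest k with d^k | N. -/

import Mathlib

/-- Generalized Fibonacci sequence: f 0 = 0, f 1 = 1, f (n+2) = s * f (n+1) + t * f n. -/
def genFib (s t : ℤ) : ℕ → ℤ
  | 0 => 0
  | 1 => 1
  | n + 2 => s * genFib s t (n + 1) + t * genFib s t n

/-- ν_d(N): the largest k with d^k ∣ N (for d ≥ 2, N ≠ 0). -/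
noncomputable def dAdicVal (d : ℕ) (N : ℤ) : ℕ := sSup {k : ℕ | (d : ℤ) ^ k ∣ N}

/-!
Take for `d'` the rank of apparition `r` of `d` (the least `n > 0` with `d ∣ f n`), so that
`d ∣ f n ↔ r ∣ n`, and `s' = |f r|`. With `F = f m` and `u = f (m + 1)`,
`f (m k) u² = F (k u^(k+1) - C(k, 2) s F u^k + F² X)`; this gives the lifting-the-exponent law
`v_p (f (m k)) = v_p (f m) + v_p k` for odd primes `p ∣ f m`. Hence `f (r k)` and `|f r| k` have
the same `p`-adic valuation at every prime `p ∣ d`, so the same `d`-adic valuation.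

For `r ≤ d`: Frobenius permutes the roots `x, 1/x` of `x² - s x + 1` over `𝔽̄_p`, so
`x^(p ∓ 1) = 1` and `p ∣ f n` for some `n ≤ (p + 1) / 2` (or `n = p` for a double root). Lifting
gives `p^e ∣ f (n p^(e-1))`, and these indices multiply over the coprime prime powers of `d`
because `f a ∣ f (a b)`.
-/

lemma padicValInt_eq_add_of_mul_sq_eq {p : ℕ} [Fact p.Prime] {a u b c : ℤ} (hu : ¬ (p : ℤ) ∣ u)
    (hbc : b * c ≠ 0) (h : a * u ^ 2 = b * c) :
    padicValInt p a = padicValInt p b + padicValInt p c := by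
  have hu₀ : u ≠ 0 := by rintro rfl; exact hu (dvd_zero _)
  have ha : a ≠ 0 := by rintro rfl; exact hbc (by rw [← h, zero_mul])
  have hpu : ¬ (p : ℤ) ∣ u ^ 2 := fun h' => hu (Int.prime_iff_natAbs_prime.mpr
    (by simpa using Fact.out) |>.dvd_of_dvd_pow h')
  have hv := congrArg (padicValInt p) h
  rwa [padicValInt.mul ha (pow_ne_zero 2 hu₀), padicValInt.mul (left_ne_zero_of_mul hbc)
    (right_ne_zero_of_mul hbc), padicValInt.eq_zero_of_not_dvd hpu, add_zero] at hv

lemma one_le_padicValInt_of_dvd {p : ℕ} [Fact p.Prime] {a : ℤ} (ha : a ≠ 0) (hpa : (p : ℤ) ∣ a) :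
    1 ≤ padicValInt p a := by
  simpa [ha] using (padicValInt_dvd_iff (p := p) 1 a).mp (by simpa using hpa)

lemma dAdicVal_eq_zero_of_not_dvd {d : ℕ} {N : ℤ} (h : ¬ (d : ℤ) ∣ N) : dAdicVal d N = 0 :=
  Nat.eq_zero_of_le_zero <| csSup_le' fun k (hk : (d : ℤ) ^ k ∣ N) => by
    by_contra hk₀
    exact h ((dvd_pow_self _ (by omega)).trans hk)

lemma natCast_dvd_iff_of_padicValInt_eq {D : ℕ} {A B : ℤ} (hA : A ≠ 0) (hB : B ≠ 0)
    (h : ∀ q, q.Prime → q ∣ D → padicValInt q A = padicValInt q B) :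
    (D : ℤ) ∣ A ↔ (D : ℤ) ∣ B := by
  rcases eq_or_ne D 0 with rfl | hD
  · simp [hA, hB]
  rw [Int.natCast_dvd, Int.natCast_dvd,
    ← Nat.factorization_le_iff_dvd hD (Int.natAbs_ne_zero.mpr hA),
    ← Nat.factorization_le_iff_dvd hD (Int.natAbs_ne_zero.mpr hB), Finsupp.le_iff, Finsupp.le_iff,
    Nat.support_factorization]
  refine forall₂_congr fun q hq => ?_
  rw [Nat.mem_primeFactors] at hq
  rw [Nat.factorization_def A.natAbs hq.1, Nat.factorization_def B.natAbs hq.1]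
  change _ ≤ padicValInt q A ↔ _ ≤ padicValInt q B
  rw [h q hq.1 hq.2.1]

lemma dAdicVal_eq_of_padicValInt_eq {d : ℕ} {A B : ℤ} (hA : A ≠ 0) (hB : B ≠ 0)
    (h : ∀ q, q.Prime → q ∣ d → padicValInt q A = padicValInt q B) :
    dAdicVal d A = dAdicVal d B := by
  unfold dAdicVal
  congr 1
  ext c
  change (d : ℤ) ^ c ∣ A ↔ (d : ℤ) ^ c ∣ B
  rw [← Nat.cast_pow]
  exact natCast_dvd_iff_of_padicValInt_eq hA hB fun q hq hqd => h q hq (hq.dvd_of_dvd_pow hqd)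

section GenFib

variable {s : ℤ}

local notation "f" => genFib s (-1)

lemma genFib_add_two (n : ℕ) : f (n + 2) = s * f (n + 1) - f n := by
  rw [genFib]; ring

lemma genFib_add (m n : ℕ) : f (m + n + 1) = f (m + 1) * f (n + 1) - f m * f n := by
  induction n using Nat.twoStepInduction generalizing m with
  | zero => simp [genFib]
  | one => rw [genFib_add_two]; simp [genFib]; ring
  | more n ih₀ ih₁ =>
    rw [show m + (n + 2) + 1 = (m + n + 1) + 2 by ring, genFib_add_two,
      show m + n + 1 + 1 = m + (n + 1) + 1 by ring, ih₁, ih₀,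
      show n + 2 + 1 = (n + 1) + 2 by ring, genFib_add_two (n + 1), genFib_add_two n]
    ring

lemma isCoprime_genFib_succ (n : ℕ) : IsCoprime (f n) (f (n + 1)) := by
  induction n with
  | zero => simp [genFib, isCoprime_one_right]
  | succ n ih =>
    rw [genFib_add_two]
    simpa [sub_eq_add_neg, add_comm, mul_comm] using ih.symm.neg_right.add_mul_left_right s

lemma genFib_dvd_genFib_mul (m k : ℕ) : f m ∣ f (m * k) := by
  rcases m with _ | m
  · simp
  induction k with
  | zero => simp [genFib]
  | succ k ih =>
    rw [show (m + 1) * (k + 1) = (m + 1) * k + m + 1 by ring, genFib_add]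
    exact dvd_sub (dvd_mul_left _ _) (dvd_mul_of_dvd_left ih _)

lemma genFib_dvd_genFib {m n : ℕ} (h : m ∣ n) : f m ∣ f n := by
  obtain ⟨k, rfl⟩ := h
  exact genFib_dvd_genFib_mul m k

lemma genFib_pos (hs : 2 ≤ s) {n : ℕ} (hn : 0 < n) : 0 < f n := by
  have hmono : ∀ n, 0 ≤ f n ∧ f n < f (n + 1) := by
    intro n
    induction n with
    | zero => simp [genFib]
    | succ n ih =>
      rw [genFib_add_two]
      constructor <;> nlinarith
  obtain ⟨n, rfl⟩ : ∃ k, n = k + 1 := ⟨n - 1, by omega⟩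
  linarith [hmono n]

lemma dvd_genFib_iff_dvd {D : ℤ} {r : ℕ} (hr : 0 < r) (hDr : D ∣ f r)
    (hmin : ∀ m, 0 < m → m < r → ¬ D ∣ f m) (n : ℕ) : D ∣ f n ↔ r ∣ n := by
  refine ⟨fun hDn => ?_, fun h => hDr.trans (genFib_dvd_genFib h)⟩
  induction n using Nat.strong_induction_on with
  | _ n ih =>
  rcases lt_or_ge n r with hnr | hrn
  · rcases Nat.eq_zero_or_pos n with rfl | hn
    · exact dvd_zero r
    · exact absurd hDn (hmin n hn hnr)
  obtain ⟨k, rfl⟩ := Nat.exists_eq_add_of_le hrn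
  obtain ⟨R, rfl⟩ : ∃ R, r = R + 1 := ⟨r - 1, by omega⟩
  have hcop : IsCoprime D (f R) := (isCoprime_genFib_succ R).symm.of_isCoprime_of_dvd_left hDr
  have hDk : D ∣ f k := by
    refine hcop.dvd_of_dvd_mul_right ?_
    rw [show f k * f R = f (k + 1) * f (R + 1) - f (R + 1 + k) by
      rw [show R + 1 + k = k + R + 1 by ring, genFib_add]; ring]
    exact dvd_sub (dvd_mul_of_dvd_right hDr _) hDn
  exact (Nat.dvd_add_right (dvd_refl _)).mpr (ih k (by omega) hDk)

lemma genFib_mul_expansion (M k : ℕ) :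
    ∃ X Y Z : ℤ,
      f ((M + 1) * k) = f (M + 1) * Z ∧
      f ((M + 1) * k + 1) = f (M + 2) ^ k + f (M + 1) ^ 2 * Y ∧
      f ((M + 1) * k) * f (M + 2) ^ 2 = f (M + 1) * (k * f (M + 2) ^ (k + 1)
        - k.choose 2 * s * f (M + 1) * f (M + 2) ^ k + f (M + 1) ^ 2 * X) := by
  set F := f (M + 1)
  set u := f (M + 2)
  induction k with
  | zero => exact ⟨0, 0, 0, by simp [genFib]⟩
  | succ k ih =>
    obtain ⟨X, Y, Z, hZ, hY, hX⟩ := ih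
    have hv : f M = s * F - u := by simp only [F, u, genFib_add_two]; ring
    have hg : f ((M + 1) * (k + 1)) = f ((M + 1) * k + 1) * F - f ((M + 1) * k) * f M := by
      rw [show (M + 1) * (k + 1) = (M + 1) * k + M + 1 by ring, genFib_add]
    have hh : f ((M + 1) * (k + 1) + 1) = f ((M + 1) * k + 1) * u - f ((M + 1) * k) * F := by
      rw [show (M + 1) * (k + 1) + 1 = (M + 1) * k + (M + 1) + 1 by ring, genFib_add]
    have hc : ((k + 1).choose 2 : ℤ) = k.choose 2 + k := by
      rw [Nat.choose_succ_succ, Nat.choose_one_right]; push_cast; ring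
    refine ⟨Y * u ^ 2 + k.choose 2 * s ^ 2 * u ^ k + X * u - s * F * X, Y * u - Z,
      u ^ k + F ^ 2 * Y - Z * (s * F - u), ?_, ?_, ?_⟩
    · rw [hg, hY, hZ, hv]; ring
    · rw [hh, hY, hZ]; ring
    · rw [hg, hY, hv, hc]; push_cast
      linear_combination (u - s * F) * hX

lemma genFib_mul_mul_sq (m k : ℕ) :
    ∃ X : ℤ, f (m * k) * f (m + 1) ^ 2 = f m * (k * f (m + 1) ^ (k + 1)
      - k.choose 2 * s * f m * f (m + 1) ^ k + f m ^ 2 * X) := by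
  rcases m with _ | M
  · exact ⟨0, by simp [genFib]⟩
  · obtain ⟨X, -, -, -, -, hX⟩ := genFib_mul_expansion (s := s) M k
    exact ⟨X, hX⟩

lemma not_dvd_genFib_succ {p : ℕ} [Fact p.Prime] {m : ℕ} (hpm : (p : ℤ) ∣ f m) :
    ¬ (p : ℤ) ∣ f (m + 1) := fun h =>
  (Nat.prime_iff_prime_int.mp Fact.out).not_isUnit ((isCoprime_genFib_succ m).isUnit_of_dvd' hpm h)

lemma padicValInt_genFib_mul_of_not_dvd {p : ℕ} [Fact p.Prime] {m k : ℕ} (hm : f m ≠ 0)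
    (hpm : (p : ℤ) ∣ f m) (hpk : ¬ p ∣ k) : padicValInt p (f (m * k)) = padicValInt p (f m) := by
  have hp : Prime (p : ℤ) := Nat.prime_iff_prime_int.mp Fact.out
  have hu := not_dvd_genFib_succ hpm
  obtain ⟨X, hX⟩ := genFib_mul_mul_sq (s := s) m k
  set F := f m
  set u := f (m + 1)
  set W := k * u ^ (k + 1) - k.choose 2 * s * F * u ^ k + F ^ 2 * X
  have hW : ¬ (p : ℤ) ∣ W := by
    intro h
    have hku : (p : ℤ) ∣ k * u ^ (k + 1) := by
      rw [show (k : ℤ) * u ^ (k + 1) = W + F * (k.choose 2 * s * u ^ k - F * X) by ring]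
      exact dvd_add h (hpm.mul_right _)
    rcases hp.dvd_mul.mp hku with h | h
    · exact hpk (Int.natCast_dvd_natCast.mp h)
    · exact hu (hp.dvd_of_dvd_pow h)
  have hW₀ : W ≠ 0 := by rintro h; exact hW (h ▸ dvd_zero _)
  rw [padicValInt_eq_add_of_mul_sq_eq hu (mul_ne_zero hm hW₀) hX,
    padicValInt.eq_zero_of_not_dvd hW, add_zero]

lemma padicValInt_genFib_mul_self {p : ℕ} [Fact p.Prime] (hp : p ≠ 2) {m : ℕ} (hm : f m ≠ 0)
    (hpm : (p : ℤ) ∣ f m) :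
    padicValInt p (f (m * p)) = padicValInt p (f m) + 1 := by
  have hu := not_dvd_genFib_succ hpm
  obtain ⟨X, hX⟩ := genFib_mul_mul_sq (s := s) m p
  set F := f m
  set u := f (m + 1)
  obtain ⟨G, hG⟩ := hpm
  obtain ⟨w, hw⟩ : (p : ℤ) ∣ (p.choose 2 : ℤ) := Int.natCast_dvd_natCast.mpr
    ((Fact.out : p.Prime).dvd_choose_self two_ne_zero
      (lt_of_le_of_ne (Fact.out : p.Prime).two_le (Ne.symm hp)))
  -- the cofactor of `F` is `W * p`, and `W ≡ u ^ (p + 1) [ZMOD p]` as `p ∣ C(p, 2)` and `p ∣ F`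
  set W := u ^ (p + 1) - w * s * F * u ^ p + p * G ^ 2 * X
  have hW : ¬ (p : ℤ) ∣ W := by
    intro h
    refine hu ((Nat.prime_iff_prime_int.mp Fact.out).dvd_of_dvd_pow (n := p + 1) ?_)
    rw [show u ^ (p + 1) = W - p * (G ^ 2 * X - w * s * G * u ^ p) by simp only [W, hG]; ring]
    exact dvd_sub h (dvd_mul_right _ _)
  have hW₀ : W ≠ 0 := by rintro h; exact hW (h ▸ dvd_zero _)
  have hX' : f (m * p) * u ^ 2 = F * (W * p) := by rw [hX, hw, hG]; simp only [W, hG]; ring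
  have hp₀ : (p : ℤ) ≠ 0 := Nat.cast_ne_zero.mpr (Fact.out : p.Prime).ne_zero
  rw [padicValInt_eq_add_of_mul_sq_eq hu (mul_ne_zero hm (mul_ne_zero hW₀ hp₀)) hX',
    padicValInt_mul_eq_succ W hW₀, padicValInt.eq_zero_of_not_dvd hW]

theorem padicValInt_genFib_mul {p : ℕ} [Fact p.Prime] (hp : p ≠ 2) {m : ℕ} (hm : f m ≠ 0)
    (hpm : (p : ℤ) ∣ f m) {k : ℕ} (hk : k ≠ 0) :
    padicValInt p (f (m * k)) = padicValInt p (f m) + padicValNat p k := by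
  have hne {n : ℕ} (h : padicValInt p (f m) ≤ padicValInt p (f n)) : f n ≠ 0 := fun h₀ => by
    rw [h₀, padicValInt.zero] at h
    have := one_le_padicValInt_of_dvd hm hpm
    omega
  have hpow (e : ℕ) : padicValInt p (f (m * p ^ e)) = padicValInt p (f m) + e := by
    induction e with
    | zero => simp
    | succ e ih =>
      rw [pow_succ, ← mul_assoc, padicValInt_genFib_mul_self hp (hne (ih ▸ le_self_add))
        (hpm.trans (genFib_dvd_genFib_mul m _)), ih, add_assoc]
  obtain ⟨e, k', hpk', rfl⟩ := Nat.exists_eq_pow_mul_and_not_dvd hk p (Fact.out : p.Prime).ne_one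
  rw [← mul_assoc, padicValInt_genFib_mul_of_not_dvd (hne ((hpow e) ▸ le_self_add))
    (hpm.trans (genFib_dvd_genFib_mul m _)) hpk', hpow,
    padicValNat.mul (pow_ne_zero _ (Fact.out : p.Prime).ne_zero) (right_ne_zero_of_mul hk),
    padicValNat.prime_pow, padicValNat.eq_zero_of_not_dvd hpk', add_zero]

open Finset in
lemma genFib_cast_eq_geom_sum₂ {R : Type*} [CommRing R] {x y : R} (hsum : x + y = s)
    (hprod : x * y = 1) (n : ℕ) : (f n : R) = ∑ i ∈ range n, x ^ i * y ^ (n - 1 - i) := by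
  have hsucc (n : ℕ) : ∑ i ∈ range (n + 1), x ^ i * y ^ (n + 1 - 1 - i) =
      x ^ n + y * ∑ i ∈ range n, x ^ i * y ^ (n - 1 - i) := by
    simpa only [Nat.add_sub_cancel] using geom_sum₂_succ_eq x y
  induction n using Nat.twoStepInduction with
  | zero => simp [genFib]
  | one => simp [genFib]
  | more n ih₀ ih₁ =>
    rw [genFib_add_two, Int.cast_sub, Int.cast_mul, ih₀, ih₁, show n + 2 = n + 1 + 1 from rfl,
      hsucc (n + 1), hsucc n, ← hsum]
    linear_combination (∑ i ∈ range n, x ^ i * y ^ (n - 1 - i)) * hprod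

lemma genFib_cast_eq_zero_of_pow_eq_one {K : Type*} [Field K] {x y : K} (hsum : x + y = s)
    (hprod : x * y = 1) (hxy : x ≠ y) {n : ℕ} (hn : x ^ (2 * n) = 1) : (f n : K) = 0 := by
  have hyx : y ^ n = x ^ n := by
    have hx : x ^ n ≠ 0 := pow_ne_zero _ (left_ne_zero_of_mul_eq_one hprod)
    refine mul_right_cancel₀ hx ?_
    rw [← mul_pow, mul_comm, hprod, one_pow, ← pow_add, ← two_mul, hn]
  have := geom_sum₂_mul x y n
  rw [← genFib_cast_eq_geom_sum₂ hsum hprod, hyx, sub_self] at this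
  exact (mul_eq_zero.mp this).resolve_right (sub_ne_zero.mpr hxy)

open Polynomial in
lemma exists_pos_le_dvd_genFib_of_prime (s : ℤ) {p : ℕ} [Fact p.Prime] (hp : p ≠ 2) :
    ∃ n, 0 < n ∧ n ≤ p ∧ (p : ℤ) ∣ genFib s (-1) n := by
  let K := AlgebraicClosure (ZMod p)
  obtain ⟨x, hx⟩ : ∃ x : K, x ^ 2 - s * x + 1 = 0 := by
    have hdeg : (X ^ 2 - C (s : K) * X + 1).degree = 2 := by compute_degree!
    obtain ⟨x, hx⟩ := IsAlgClosed.exists_root _ (by rw [hdeg]; exact two_ne_zero)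
    exact ⟨x, by simpa using hx⟩
  set y : K := s - x
  have hsum : x + y = s := by ring
  have hprod : x * y = 1 := by linear_combination -hx
  have hfrob : (x ^ p - x) * (x ^ p - y) = 0 := by
    have h := congrArg (frobenius K p) hx
    simp only [map_add, map_sub, map_mul, map_pow, map_intCast, map_one, map_zero,
      frobenius_def] at h
    linear_combination h - x ^ p * hsum + hprod
  suffices ∃ n, 0 < n ∧ n ≤ p ∧ (genFib s (-1) n : K) = 0 by
    simpa only [CharP.intCast_eq_zero_iff K p] using this
  have hp3 : 3 ≤ p := by have := (Fact.out : p.Prime).two_le; omega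
  obtain ⟨q, hq⟩ := (Fact.out : p.Prime).odd_of_ne_two hp
  by_cases hxy : x = y
  · refine ⟨p, by omega, le_rfl, ?_⟩
    rw [genFib_cast_eq_geom_sum₂ hsum hprod, hxy, geom_sum₂_self, CharP.cast_eq_zero, zero_mul]
  rcases mul_eq_zero.mp hfrob with h | h
  · refine ⟨(p - 1) / 2, by omega, by omega, genFib_cast_eq_zero_of_pow_eq_one hsum hprod hxy ?_⟩
    rw [show 2 * ((p - 1) / 2) = p - 1 by omega]
    refine mul_left_cancel₀ (left_ne_zero_of_mul_eq_one hprod) ?_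
    rw [← pow_succ', Nat.sub_add_cancel (by omega), mul_one, sub_eq_zero.mp h]
  · refine ⟨(p + 1) / 2, by omega, by omega, genFib_cast_eq_zero_of_pow_eq_one hsum hprod hxy ?_⟩
    rw [show 2 * ((p + 1) / 2) = p + 1 by omega, pow_succ, sub_eq_zero.mp h, mul_comm, hprod]

lemma exists_pos_le_dvd_genFib (hs : 2 ≤ s) {d : ℕ} (hd : Odd d) :
    ∃ n, 0 < n ∧ n ≤ d ∧ (d : ℤ) ∣ f n := by
  induction d using Nat.recOnPosPrimePosCoprime with
  | prime_pow p e hp he =>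
    have := Fact.mk hp
    have hp2 : p ≠ 2 := by
      rintro rfl
      exact Nat.not_even_iff_odd.mpr hd (Nat.even_pow.mpr ⟨even_two, he.ne'⟩)
    obtain ⟨n, hn, hnp, hpn⟩ := exists_pos_le_dvd_genFib_of_prime s hp2
    have hv := padicValInt_genFib_mul hp2 (genFib_pos hs hn).ne' hpn
      (pow_ne_zero (e - 1) hp.ne_zero)
    refine ⟨n * p ^ (e - 1), Nat.mul_pos hn (pow_pos hp.pos _), ?_, ?_⟩
    · calc n * p ^ (e - 1) ≤ p * p ^ (e - 1) := by gcongr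
        _ = p ^ e := by rw [← pow_succ', Nat.sub_add_cancel he]
    · rw [Nat.cast_pow, padicValInt_dvd_iff, hv, padicValNat.prime_pow]
      have := one_le_padicValInt_of_dvd (genFib_pos hs hn).ne' hpn
      omega
  | zero => exact absurd hd Nat.not_odd_zero
  | one => exact ⟨1, one_pos, le_rfl, one_dvd _⟩
  | coprime a b _ _ hab iha ihb =>
    obtain ⟨m, hm, hma, ham⟩ := iha (Nat.Odd.of_mul_left hd)
    obtain ⟨n, hn, hnb, hbn⟩ := ihb (Nat.Odd.of_mul_right hd)
    refine ⟨m * n, by positivity, Nat.mul_le_mul hma hnb, ?_⟩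
    rw [Nat.cast_mul]
    exact (Nat.Coprime.isCoprime hab).mul_dvd (ham.trans (genFib_dvd_genFib_mul m n))
      (hbn.trans (genFib_dvd_genFib (dvd_mul_left n m)))

lemma dAdicVal_genFib_mul (hs : 2 ≤ s) {d : ℕ} (hd : Odd d) {r k : ℕ} (hr : 0 < r)
    (hdr : (d : ℤ) ∣ f r) (hk : 0 < k) :
    dAdicVal d (f (r * k)) = dAdicVal d (((f r).natAbs * k : ℕ) : ℤ) := by
  have hfr := (genFib_pos hs hr).ne'
  refine dAdicVal_eq_of_padicValInt_eq (genFib_pos hs (Nat.mul_pos hr hk)).ne'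
    (by positivity) fun q hq hqd => ?_
  have := Fact.mk hq
  have hq2 : q ≠ 2 := by
    rintro rfl
    exact Nat.not_even_iff_odd.mpr hd (even_iff_two_dvd.mpr hqd)
  rw [padicValInt_genFib_mul hq2 hfr ((Int.natCast_dvd_natCast.mpr hqd).trans hdr) hk.ne',
    padicValInt.of_nat, padicValNat.mul (Int.natAbs_ne_zero.mpr hfr) hk.ne']
  rfl

end GenFib

theorem valuation_conj_general (s : ℤ) (hs : 2 ≤ s) (d : ℕ) (hodd : Odd d) :
    ∃ s' d' : ℕ, 0 < s' ∧ 0 < d' ∧ d' ≤ d ∧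
      ∀ n : ℕ, 0 < n →
        (¬ d' ∣ n → dAdicVal d (genFib s (-1) n) = 0) ∧
        (d' ∣ n → dAdicVal d (genFib s (-1) n) = dAdicVal d ((s' * (n / d') : ℕ) : ℤ)) := by
  obtain ⟨N, hN, hNd, hdN⟩ := exists_pos_le_dvd_genFib hs hodd
  have hex : ∃ n, 0 < n ∧ (d : ℤ) ∣ genFib s (-1) n := ⟨N, hN, hdN⟩
  set r := Nat.find hex
  obtain ⟨hr, hdr⟩ : 0 < r ∧ (d : ℤ) ∣ genFib s (-1) r := Nat.find_spec hex
  have hrank := dvd_genFib_iff_dvd hr hdr fun m hm hmr hdm => Nat.find_min hex hmr ⟨hm, hdm⟩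
  refine ⟨(genFib s (-1) r).natAbs, r, Int.natAbs_pos.mpr (genFib_pos hs hr).ne', hr,
    (Nat.find_min' hex ⟨hN, hdN⟩).trans hNd, fun n hn => ⟨fun hrn =>
      dAdicVal_eq_zero_of_not_dvd (mt (hrank n).mp hrn), ?_⟩⟩
  rintro ⟨k, rfl⟩
  rw [Nat.mul_div_cancel_left k hr]
  exact dAdicVal_genFib_mul hs hodd hr hdr (Nat.pos_of_mul_pos_left hn)

/-- Valuation conjecture of ACMS for arbitrary odd d ≥ 3. -/
theorem valuation_conj (s : ℤ) (hs : 2 ≤ s) (d : ℕ) (hd : 3 ≤ d) (hodd : Odd d) :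
    ∃ s' d' : ℕ, 0 < s' ∧ 0 < d' ∧ d' ≤ d ∧
      ∀ n : ℕ, 0 < n →
        (¬ d' ∣ n → dAdicVal d (genFib s (-1) n) = 0) ∧
        (d' ∣ n → dAdicVal d (genFib s (-1) n) = dAdicVal d ((s' * (n / d') : ℕ) : ℤ)) :=
  valuation_conj_general s hs d hodd
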